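/- arXiv:1410.8257 — 5 statements merged into one kernel-verified Lean document; each statement's English description precedes it below -/
import Mathlib

section
/- Let R > 0 and M ≥ 0. Let h be continuous on {z ∈ ℂ : |z| ≥ R}, holomorphic on {z ∈ ℂ : |z| > R}, with h(z) → 0 as |z| → ∞, and suppose |h(z)| ≤ M for all z with |z| = R. Then for every z ∈ ℂ with |z| ≥ 2R² and |z| > R one has |z|·|h(z)| ≤ 2RM. (Quantitative decay estimate (5.7), the core of Proposition 5.1(ii).) -/
open Filter Bornology Topology

/-!
Invert the exterior of the disk: `g w := h w⁻¹`, extended by `g 0 := 0`, is continuous on the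
closed disk of radius `R⁻¹` because `h → 0` at infinity, holomorphic inside it by the removable
singularity theorem, and bounded by `M` on its boundary circle. By the maximum modulus principle
`g` maps the disk into the closed ball of radius `M`, so the Schwarz lemma gives
`‖g w‖ ≤ R M ‖w‖`, i.e. `‖z‖ ‖h z‖ ≤ R M` for all `‖z‖ > R`.
-/

open Metric Set Function

namespace Complex

variable {E F : Type*} [NormedAddCommGroup E] [NormedSpace ℂ E] [Nontrivial E]
  [NormedAddCommGroup F] [NormedSpace ℂ F]

theorem norm_le_div_mul_norm_of_forall_mem_sphere_norm_le {f : E → F} {r M : ℝ}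
    (hf : DiffContOnCl ℂ f (ball 0 r)) (hf₀ : f 0 = 0)
    (hM : ∀ w ∈ sphere 0 r, ‖f w‖ ≤ M) {w : E} (hw : w ∈ ball 0 r) : ‖f w‖ ≤ M / r * ‖w‖ := by
  have hmaps : MapsTo f (ball 0 r) (closedBall (f 0) M) := fun u hu => by
    rw [hf₀, mem_closedBall_zero_iff]
    refine norm_le_of_forall_mem_frontier_norm_le isBounded_ball hf ?_ (subset_closure hu)
    exact fun u hu => hM u (frontier_ball_subset_sphere hu)
  simpa [hf₀] using dist_le_div_mul_dist_of_mapsTo_ball hf.differentiableOn hmaps hw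

end Complex

section Inversion

variable {𝕜 : Type*} [NormedDivisionRing 𝕜]

theorem mapsTo_inv_closedBall_inv_diff_zero {r : ℝ} (hr : 0 < r) :
    MapsTo (·⁻¹) (closedBall (0 : 𝕜) r⁻¹ \ {0}) {z | r ≤ ‖z‖} := by
  rintro w ⟨hw, hw₀ : w ≠ 0⟩
  rw [mem_closedBall_zero_iff] at hw
  rwa [mem_ofPred_eq, norm_inv, le_inv_comm₀ hr (norm_pos_iff.2 hw₀)]

theorem mapsTo_inv_ball_inv_diff_zero {r : ℝ} (hr : 0 < r) :
    MapsTo (·⁻¹) (ball (0 : 𝕜) r⁻¹ \ {0}) {z | r < ‖z‖} := by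
  rintro w ⟨hw, hw₀ : w ≠ 0⟩
  rw [mem_ball_zero_iff] at hw
  rwa [mem_ofPred_eq, norm_inv, lt_inv_comm₀ hr (norm_pos_iff.2 hw₀)]

variable {E : Type*} [TopologicalSpace E] {h : 𝕜 → E} {a : E}

theorem tendsto_comp_inv_nhdsNE_zero (hlim : Tendsto h (cobounded 𝕜) (𝓝 a)) :
    Tendsto (fun w => h w⁻¹) (𝓝[≠] 0) (𝓝 a) :=
  hlim.comp tendsto_inv₀_nhdsNE_zero

theorem continuousOn_update_comp_inv_closedBall [DecidableEq 𝕜] {r : ℝ} (hr : 0 < r)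
    (hcont : ContinuousOn h {z | r ≤ ‖z‖}) (hlim : Tendsto h (cobounded 𝕜) (𝓝 a)) :
    ContinuousOn (update (fun w => h w⁻¹) 0 a) (closedBall 0 r⁻¹) := by
  refine continuousOn_update_iff.2 ⟨?_, fun _ => ?_⟩
  · exact hcont.comp (continuousOn_inv₀.mono fun _ hw => hw.2)
      (mapsTo_inv_closedBall_inv_diff_zero hr)
  · exact (tendsto_comp_inv_nhdsNE_zero hlim).mono_left (nhdsWithin_mono _ fun _ hw => hw.2)

end Inversion

namespace Complex

variable {F : Type*} [NormedAddCommGroup F] [NormedSpace ℂ F] [CompleteSpace F]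
  {h : ℂ → F} {r : ℝ}

theorem diffContOnCl_update_comp_inv_ball (hr : 0 < r) (hcont : ContinuousOn h {z | r ≤ ‖z‖})
    (hdiff : DifferentiableOn ℂ h {z | r < ‖z‖}) (hlim : Tendsto h (cobounded ℂ) (𝓝 0)) :
    DiffContOnCl ℂ (update (fun w => h w⁻¹) 0 0) (ball 0 r⁻¹) := by
  refine ⟨(differentiableOn_compl_singleton_and_continuousAt_iff
    (ball_mem_nhds (0 : ℂ) (inv_pos.2 hr))).1 ⟨?_, ?_⟩, ?_⟩
  · have hinv : DifferentiableOn ℂ (fun w : ℂ => h w⁻¹) (ball 0 r⁻¹ \ {0}) :=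
      hdiff.comp (fun w hw => differentiableWithinAt_inv hw.2 _)
        (mapsTo_inv_ball_inv_diff_zero hr)
    exact hinv.congr fun w hw => update_of_ne hw.2 _ _
  · exact continuousAt_update_same.2 (tendsto_comp_inv_nhdsNE_zero hlim)
  · rw [closure_ball (0 : ℂ) (inv_pos.2 hr).ne']
    exact continuousOn_update_comp_inv_closedBall hr hcont hlim

theorem norm_mul_norm_le_of_tendsto_cobounded (hr : 0 < r) {M : ℝ}
    (hcont : ContinuousOn h {z | r ≤ ‖z‖}) (hdiff : DifferentiableOn ℂ h {z | r < ‖z‖})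
    (hlim : Tendsto h (cobounded ℂ) (𝓝 0)) (hM : ∀ z : ℂ, ‖z‖ = r → ‖h z‖ ≤ M)
    {z : ℂ} (hz : r < ‖z‖) : ‖z‖ * ‖h z‖ ≤ r * M := by
  have hz₀ : z ≠ 0 := norm_pos_iff.1 (hr.trans hz)
  have hsphere : ∀ w ∈ sphere (0 : ℂ) r⁻¹, ‖update (fun u => h u⁻¹) 0 0 w‖ ≤ M := by
    intro w hw
    rw [mem_sphere_zero_iff_norm] at hw
    have hw₀ : w ≠ 0 := norm_pos_iff.1 (hw ▸ inv_pos.2 hr)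
    rw [update_of_ne hw₀]
    exact hM _ (by rw [norm_inv, hw, inv_inv])
  have hmem : z⁻¹ ∈ ball (0 : ℂ) r⁻¹ := by
    rw [mem_ball_zero_iff, norm_inv]
    exact inv_strictAnti₀ hr hz
  have hschwarz := norm_le_div_mul_norm_of_forall_mem_sphere_norm_le
    (diffContOnCl_update_comp_inv_ball hr hcont hdiff hlim) (update_self ..) hsphere hmem
  rw [update_of_ne (inv_ne_zero hz₀), inv_inv, norm_inv, div_inv_eq_mul] at hschwarz
  calc ‖z‖ * ‖h z‖ ≤ ‖z‖ * (M * r * ‖z‖⁻¹) := by gcongr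
    _ = r * M := by field_simp

end Complex

/-- Quantitative decay estimate (5.7), the core of Proposition 5.1(ii):
a function holomorphic outside a disk of radius `R`, vanishing at infinity and
bounded by `M` on the circle of radius `R`, satisfies `|z·h(z)| ≤ 2RM` for
`|z| ≥ 2R²`. -/
theorem decay_estimate_at_infinity
    (R M : ℝ) (hR : 0 < R) (hM : 0 ≤ M) (h : ℂ → ℂ)
    (hcont : ContinuousOn h {z : ℂ | R ≤ ‖z‖})
    (hdiff : DifferentiableOn ℂ h {z : ℂ | R < ‖z‖})
    (hlim : Tendsto h (cobounded ℂ) (𝓝 0))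
    (hbound : ∀ z : ℂ, ‖z‖ = R → ‖h z‖ ≤ M) :
    ∀ z : ℂ, 2 * R ^ 2 ≤ ‖z‖ → R < ‖z‖ →
      ‖z‖ * ‖h z‖ ≤ 2 * R * M := by
  intro z _ hz
  calc ‖z‖ * ‖h z‖ ≤ R * M :=
        Complex.norm_mul_norm_le_of_tendsto_cobounded hR hcont hdiff hlim hbound hz
    _ ≤ 2 * R * M := by linarith [mul_nonneg hR.le hM]
end

section
/- Let a < b be real numbers, let h : ℝ × ℂ → ℂ be continuous on [a, b] × ℂ, and suppose there is L ≥ 0 with |h(t, z) − h(t, w)| ≤ L·|z − w| for all t ∈ [a, b] and z, w ∈ ℂ. Assume moreover that h(t, x) is real for every t ∈ [a, b] and every real x. If z : [a, b] → ℂ satisfies z'(t) = h(t, z(t)) for all t ∈ [a, b] and z(t₀) ∈ ℝ for some t₀ ∈ [a, b], then z(t) ∈ ℝ for every t ∈ [a, b]. (Real invariance of solutions of the driving ODE, the key step in the proofs of Lemma 5.2 and Lemma 5.3.) -/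
/-!
The imaginary part `y = Im z` satisfies `y' = Im h(t, z)`. Since `h(t, Re z)` is real, the Lipschitz
bound gives `|Im h(t, z)| = |Im (h(t, z) - h(t, Re z))| ≤ L |z - Re z| = L |y|`, so Grönwall's
inequality, run forwards and backwards from `t₀`, forces `y ≡ 0`.
-/

open Set

section Gronwall

variable {E : Type*} [NormedAddCommGroup E] [NormedSpace ℝ E]

theorem eq_zero_of_abs_deriv_le_mul_abs_self_of_eq_zero_left {f f' : ℝ → E} {K a b : ℝ}
    (hf : ContinuousOn f (Icc a b)) (hf' : ∀ x ∈ Ioc a b, HasDerivWithinAt f (f' x) (Iic x) x)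
    (hb : f b = 0) (bound : ∀ x ∈ Ioc a b, ‖f' x‖ ≤ K * ‖f x‖) :
    ∀ x ∈ Icc a b, f x = 0 := by
  have hneg_Icc : MapsTo Neg.neg (Icc (-b) (-a)) (Icc a b) :=
    fun _ hx ↦ ⟨le_neg.mp hx.2, neg_le.mp hx.1⟩
  have hneg_Ico : MapsTo Neg.neg (Ico (-b) (-a)) (Ioc a b) :=
    fun _ hx ↦ ⟨lt_neg.mp hx.2, neg_le.mp hx.1⟩
  have hreflect := eq_zero_of_abs_deriv_le_mul_abs_self_of_eq_zero_right (K := K)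
    (f := f ∘ Neg.neg) (f' := fun x ↦ (-1 : ℝ) • f' (-x))
    (hf.comp continuousOn_neg hneg_Icc)
    (fun x hx ↦ (hf' (-x) (hneg_Ico hx)).scomp x (hasDerivAt_neg x).hasDerivWithinAt
      fun _ hy ↦ mem_Iic.mpr (neg_le_neg hy))
    (by simpa using hb)
    (fun x hx ↦ by simpa [norm_smul] using bound (-x) (hneg_Ico hx))
  intro x hx
  simpa using hreflect (-x) ⟨neg_le_neg hx.2, neg_le_neg hx.1⟩

theorem eq_zero_of_abs_deriv_le_mul_abs_self_of_eq_zero {f f' : ℝ → E} {K a b t₀ : ℝ}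
    (hf' : ∀ x ∈ Icc a b, HasDerivWithinAt f (f' x) (Icc a b) x)
    (ht₀ : t₀ ∈ Icc a b) (h₀ : f t₀ = 0) (bound : ∀ x ∈ Icc a b, ‖f' x‖ ≤ K * ‖f x‖) :
    ∀ x ∈ Icc a b, f x = 0 := by
  have hf : ContinuousOn f (Icc a b) := fun x hx ↦ (hf' x hx).continuousWithinAt
  intro x hx
  rcases le_total x t₀ with hxt | htx
  · refine eq_zero_of_abs_deriv_le_mul_abs_self_of_eq_zero_left
      (hf.mono (Icc_subset_Icc_right ht₀.2)) (fun y hy ↦ ?_) h₀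
      (fun y hy ↦ bound y ⟨hy.1.le, hy.2.trans ht₀.2⟩) x ⟨hx.1, hxt⟩
    exact (hf' y ⟨hy.1.le, hy.2.trans ht₀.2⟩).mono_of_mem_nhdsWithin
      (Icc_mem_nhdsLE_of_mem ⟨hy.1, hy.2.trans ht₀.2⟩)
  · refine eq_zero_of_abs_deriv_le_mul_abs_self_of_eq_zero_right
      (hf.mono (Icc_subset_Icc_left ht₀.1)) (fun y hy ↦ ?_) h₀
      (fun y hy ↦ bound y ⟨ht₀.1.trans hy.1, hy.2.le⟩) x ⟨htx, hx.2⟩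
    exact (hf' y ⟨ht₀.1.trans hy.1, hy.2.le⟩).mono_of_mem_nhdsWithin
      (Icc_mem_nhdsGE_of_mem ⟨ht₀.1.trans hy.1, hy.2⟩)

end Gronwall

theorem Complex.abs_im_apply_le_mul_abs_im {g : ℂ → ℂ} {L : ℝ}
    (hlip : ∀ z w, ‖g z - g w‖ ≤ L * ‖z - w‖) (hreal : ∀ x : ℝ, (g x).im = 0) (w : ℂ) :
    |(g w).im| ≤ L * |w.im| := by
  have hw : w - w.re = w.im * I := by
    apply Complex.ext <;> simp
  calc |(g w).im| = |(g w - g w.re).im| := by rw [sub_im, hreal, sub_zero]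
    _ ≤ ‖g w - g w.re‖ := abs_im_le_norm _
    _ ≤ L * ‖w - w.re‖ := hlip _ _
    _ = L * |w.im| := by rw [hw, norm_mul, norm_I, mul_one, norm_real, Real.norm_eq_abs]

theorem real_invariance_of_ODE_solution_general
    (a b : ℝ) (h : ℝ → ℂ → ℂ) (L : ℝ)
    (hlip : ∀ t ∈ Set.Icc a b, ∀ z w : ℂ,
      ‖h t z - h t w‖ ≤ L * ‖z - w‖)
    (hreal : ∀ t ∈ Set.Icc a b, ∀ x : ℝ, (h t (x : ℂ)).im = 0)
    (z : ℝ → ℂ)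
    (hz : ∀ t ∈ Set.Icc a b, HasDerivWithinAt z (h t (z t)) (Set.Icc a b) t)
    (t₀ : ℝ) (ht₀ : t₀ ∈ Set.Icc a b) (hz₀ : (z t₀).im = 0) :
    ∀ t ∈ Set.Icc a b, (z t).im = 0 := by
  have him_deriv : ∀ t ∈ Icc a b,
      HasDerivWithinAt (fun t ↦ (z t).im) (h t (z t)).im (Icc a b) t :=
    fun t ht ↦ Complex.imCLM.hasFDerivAt.comp_hasDerivWithinAt t (hz t ht)
  refine eq_zero_of_abs_deriv_le_mul_abs_self_of_eq_zero (K := L) him_deriv ht₀ hz₀ fun t ht ↦ ?_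
  simpa only [Real.norm_eq_abs] using
    Complex.abs_im_apply_le_mul_abs_im (hlip t ht) (hreal t ht) (z t)

/-- Real invariance of solutions of the driving ODE (the key step in the proofs of
Lemmas 5.2 and 5.3): if the field `h` is Lipschitz, jointly continuous and maps
real points to real values, then a solution that is real at one time is real at
all times. -/
theorem real_invariance_of_ODE_solution
    (a b : ℝ) (hab : a < b) (h : ℝ → ℂ → ℂ) (L : ℝ) (hL : 0 ≤ L)
    (hcont : ContinuousOn (fun p : ℝ × ℂ => h p.1 p.2) (Set.Icc a b ×ˢ Set.univ))
    (hlip : ∀ t ∈ Set.Icc a b, ∀ z w : ℂ,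
      ‖h t z - h t w‖ ≤ L * ‖z - w‖)
    (hreal : ∀ t ∈ Set.Icc a b, ∀ x : ℝ, (h t (x : ℂ)).im = 0)
    (z : ℝ → ℂ)
    (hz : ∀ t ∈ Set.Icc a b, HasDerivWithinAt z (h t (z t)) (Set.Icc a b) t)
    (t₀ : ℝ) (ht₀ : t₀ ∈ Set.Icc a b) (hz₀ : (z t₀).im = 0) :
    ∀ t ∈ Set.Icc a b, (z t).im = 0 :=
  real_invariance_of_ODE_solution_general a b h L hlip hreal z hz t₀ ht₀ hz₀
end

section
/- Let t > 0, M₁ > 0, let ξ : [0, t] → ℂ be continuous, and set R := max( sup_{0 ≤ s ≤ t} |ξ(s) − ξ(0)| , √(M₁ t / 2) ) (so R > 0). Let z ∈ ℂ with |z − ξ(0)| ≥ 4R, and let g : [0, t] → ℂ be differentiable with g(0) = z, satisfying: for every s ∈ [0, t], if |g(s) − ξ(s)| ≥ 2R then |g'(s)| ≤ M₁/(2R). Then for every s ∈ [0, t] one has |g(s) − z| ≤ R and |g(s) − ξ(s)| ≥ 2R. (The quantitative hull-growth estimate proving Lemma 5.7, which yields F_t ⊂ B(ξ(0), 4R_t).)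 -/
open Filter Topology Set Metric

/-! As long as `g` stays within `R` of `z`, it stays at distance `≥ 2R` from the driving
function, so its speed is at most `M₁ / (2R)`; over time `t` it then moves at most
`M₁ t / (2R) ≤ R`, since `R² ≥ M₁ t / 2`. A continuous induction turns this circular
argument into a proof. -/

theorem norm_image_sub_le_of_norm_deriv_le_on_closedBall
    {E : Type*} [NormedAddCommGroup E] [NormedSpace ℝ E] {f f' : ℝ → E} {a b C r : ℝ}
    (hf : ∀ x ∈ Icc a b, HasDerivWithinAt f (f' x) (Icc a b) x)
    (hC : 0 < C) (hCr : C * (b - a) ≤ r)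
    (bound : ∀ x ∈ Ico a b, f x ∈ closedBall (f a) r → ‖f' x‖ ≤ C) :
    ∀ x ∈ Icc a b, ‖f x - f a‖ ≤ C * (x - a) := by
  have hfc : ContinuousOn f (Icc a b) := fun x hx => (hf x hx).continuousWithinAt
  set s := {x | ‖f x - f a‖ ≤ C * (x - a)}
  have hs_closed : IsClosed (s ∩ Icc a b) := by
    rw [inter_comm]
    exact isClosed_Icc.isClosed_le (hfc.sub continuousOn_const).norm (by fun_prop)
  refine hs_closed.Icc_subset_of_forall_mem_nhdsWithin (by simp [s]) ?_
  rintro x ⟨hxs, hxa, hxb⟩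
  -- at `x < b` the a priori bound is strict, so `f` stays in the ball a little longer
  have hx_ball : f x ∈ ball (f a) r := by
    rw [mem_ball, dist_eq_norm]
    calc ‖f x - f a‖ ≤ C * (x - a) := hxs
      _ < C * (b - a) := by gcongr
      _ ≤ r := hCr
  have h_near : ∀ᶠ y in 𝓝[≥] x, y ∈ Ico a b ∧ f y ∈ ball (f a) r := by
    rw [← nhdsWithin_Ico_eq_nhdsGE hxb]
    have hcont :=
      (hfc x ⟨hxa, hxb.le⟩).mono (Ico_subset_Icc_self.trans (Icc_subset_Icc hxa le_rfl))
    filter_upwards [self_mem_nhdsWithin, hcont (isOpen_ball.mem_nhds hx_ball)] with y hy hfy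
    exact ⟨⟨hxa.trans hy.1, hy.2⟩, hfy⟩
  obtain ⟨u, hxu, hu⟩ := mem_nhdsGE_iff_exists_Ico_subset.mp h_near
  refine mem_nhdsGT_iff_exists_Ioo_subset.mpr ⟨u, hxu, fun v hv => ?_⟩
  have hsub : Icc x v ⊆ Icc a b := Icc_subset_Icc hxa (hu ⟨hv.1.le, hv.2⟩).1.2.le
  have h_step : ‖f v - f x‖ ≤ C * (v - x) := by
    refine norm_image_sub_le_of_norm_deriv_le_segment' (fun y hy => (hf y (hsub hy)).mono hsub)
      (fun y hy => ?_) v ⟨hv.1.le, le_rfl⟩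
    obtain ⟨hy_mem, hy_ball⟩ := hu ⟨hy.1, hy.2.trans hv.2⟩
    exact bound y hy_mem (ball_subset_closedBall hy_ball)
  calc ‖f v - f a‖ ≤ ‖f v - f x‖ + ‖f x - f a‖ := norm_sub_le_norm_sub_add_norm_sub _ _ _
    _ ≤ C * (v - x) + C * (x - a) := add_le_add h_step hxs
    _ = C * (v - a) := by ring

theorem hull_growth_estimate_general
    (t : ℝ) (M₁ : ℝ) (hM₁ : 0 < M₁)
    (ξ : ℝ → ℂ) (hξ : ContinuousOn ξ (Set.Icc 0 t))
    (R : ℝ)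
    (hR : R = max (sSup ((fun s => ‖ξ s - ξ 0‖) '' Set.Icc 0 t))
      (Real.sqrt (M₁ * t / 2)))
    (hRpos : 0 < R)
    (z : ℂ) (hz : 4 * R ≤ ‖z - ξ 0‖)
    (g g' : ℝ → ℂ) (hg0 : g 0 = z)
    (hderiv : ∀ s ∈ Set.Icc 0 t, HasDerivWithinAt g (g' s) (Set.Icc 0 t) s)
    (hbound : ∀ s ∈ Set.Icc 0 t, 2 * R ≤ ‖g s - ξ s‖ →
      ‖g' s‖ ≤ M₁ / (2 * R)) :
    ∀ s ∈ Set.Icc 0 t,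
      ‖g s - z‖ ≤ R ∧ 2 * R ≤ ‖g s - ξ s‖ := by
  have hξ_near : ∀ s ∈ Icc 0 t, ‖ξ s - ξ 0‖ ≤ R := fun s hs =>
    (le_csSup (isCompact_Icc.image_of_continuousOn (hξ.sub continuousOn_const).norm).bddAbove
      ⟨s, hs, rfl⟩).trans (hR ▸ le_max_left _ _)
  have h_time : M₁ / (2 * R) * t ≤ R := by
    have : M₁ * t / 2 ≤ R ^ 2 := (Real.sqrt_le_left hRpos.le).mp (hR ▸ le_max_right _ _)
    rw [div_mul_eq_mul_div, div_le_iff₀ (by positivity)]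
    nlinarith
  have h_far : ∀ s ∈ Icc 0 t, ‖g s - z‖ ≤ R → 2 * R ≤ ‖g s - ξ s‖ := by
    intro s hs hgs
    have h₁ := norm_sub_le_norm_sub_add_norm_sub z (g s) (ξ 0)
    have h₂ := norm_sub_le_norm_sub_add_norm_sub (g s) (ξ s) (ξ 0)
    rw [norm_sub_rev z (g s)] at h₁
    linarith [hξ_near s hs]
  have h_move : ∀ s ∈ Icc 0 t, ‖g s - z‖ ≤ M₁ / (2 * R) * s := by
    simpa [hg0] using norm_image_sub_le_of_norm_deriv_le_on_closedBall hderiv (by positivity)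
      (by simpa using h_time) fun s hs hgs => hbound s (Ico_subset_Icc_self hs)
        (h_far s (Ico_subset_Icc_self hs) (by rwa [mem_closedBall, dist_eq_norm, hg0] at hgs))
  intro s hs
  have h_close : ‖g s - z‖ ≤ R :=
    (h_move s hs).trans ((mul_le_mul_of_nonneg_left hs.2 (by positivity)).trans h_time)
  exact ⟨h_close, h_far s hs h_close⟩

/-- The quantitative hull-growth estimate proving Lemma 5.7, which yields
`F_t ⊂ B(ξ(0), 4 R_t)`. -/
theorem hull_growth_estimate
    (t : ℝ) (ht : 0 < t) (M₁ : ℝ) (hM₁ : 0 < M₁)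
    (ξ : ℝ → ℂ) (hξ : ContinuousOn ξ (Set.Icc 0 t))
    (R : ℝ)
    (hR : R = max (sSup ((fun s => ‖ξ s - ξ 0‖) '' Set.Icc 0 t))
      (Real.sqrt (M₁ * t / 2)))
    (hRpos : 0 < R)
    (z : ℂ) (hz : 4 * R ≤ ‖z - ξ 0‖)
    (g g' : ℝ → ℂ) (hg0 : g 0 = z)
    (hderiv : ∀ s ∈ Set.Icc 0 t, HasDerivWithinAt g (g' s) (Set.Icc 0 t) s)
    (hbound : ∀ s ∈ Set.Icc 0 t, 2 * R ≤ ‖g s - ξ s‖ →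
      ‖g' s‖ ≤ M₁ / (2 * R)) :
    ∀ s ∈ Set.Icc 0 t,
      ‖g s - z‖ ≤ R ∧ 2 * R ≤ ‖g s - ξ s‖ :=
  hull_growth_estimate_general t M₁ hM₁ ξ hξ R hR hRpos z hz g g' hg0 hderiv hbound
end

section
/- Let t > 0, C > 0, M ≥ 0, and let ξ : [0, t] → ℂ satisfy |ξ(s)| ≤ M for all s ∈ [0, t]. Suppose that for each z ∈ ℂ with |z| > M there is a differentiable function G(·, z) : [0, t] → ℂ with G(0, z) = z such that, for every s ∈ [0, t] with G(s, z) ≠ ξ(s), |∂_s G(s, z)| ≤ C / |G(s, z) − ξ(s)|. Then G(t, z) − z → 0 as |z| → ∞; that is, for every ε > 0 there is ρ > M such that |G(t, z) − z| < ε whenever |z| ≥ ρ. (The hydrodynamic normalization at infinity of the Komatu–Loewner flow, the core of Theorem 5.8(i).) -/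
open Set

/-! A barrier argument: as long as `‖G(s, z) − z‖ ≤ K s`, the point `G(s, z)` stays at distance
at least `|z| − M − K t` from the driving function, so its speed is at most
`C / (|z| − M − K t)`, which is `< K` once `|z|` is large. By the fencing theorem the bound
`‖G(s, z) − z‖ ≤ K s` therefore never breaks, and `K t` can be chosen below any given `ε`. -/

theorem norm_sub_le_mul_of_norm_deriv_le_div_dist {E : Type*} [NormedAddCommGroup E]
    [NormedSpace ℝ E] {f f' ξ : ℝ → E} {a b C K d : ℝ}
    (hf : ∀ s ∈ Icc a b, HasDerivWithinAt f (f' s) (Icc a b) s)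
    (hξ : ∀ s ∈ Icc a b, d ≤ ‖f a - ξ s‖)
    (hspeed : ∀ s ∈ Icc a b, f s ≠ ξ s → ‖f' s‖ ≤ C / ‖f s - ξ s‖)
    (hK : 0 ≤ K) (hd : K * (b - a) < d) (hC : C < K * (d - K * (b - a))) :
    ∀ s ∈ Icc a b, ‖f s - f a‖ ≤ K * (s - a) := by
  have hcont : ContinuousOn (fun s => f s - f a) (Icc a b) := fun s hs =>
    (hf s hs).continuousWithinAt.sub continuousWithinAt_const
  have hderiv : ∀ s ∈ Ico a b, HasDerivWithinAt (fun s => f s - f a) (f' s) (Ici s) s :=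
    fun s hs => ((hf s (Ico_subset_Icc_self hs)).sub_const (f a)).mono_of_mem_nhdsWithin
      (Icc_mem_nhdsGE_of_mem hs)
  have hbarrier : ∀ s, HasDerivAt (fun s => K * (s - a)) K s := fun s => by
    simpa using ((hasDerivAt_id s).sub_const a).const_mul K
  refine image_norm_le_of_norm_deriv_right_lt_deriv_boundary hcont hderiv (by simp) hbarrier ?_
  intro s hs hon
  have hs' : s ∈ Icc a b := Ico_subset_Icc_self hs
  have hdrift : ‖f s - f a‖ ≤ K * (b - a) := by
    rw [hon]; exact mul_le_mul_of_nonneg_left (by linarith [hs.2]) hK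
  have hdist : d - K * (b - a) ≤ ‖f s - ξ s‖ := by
    have := norm_sub_norm_le (f a - ξ s) (f a - f s)
    rw [sub_sub_sub_cancel_left, norm_sub_rev (f a) (f s)] at this
    linarith [hξ s hs']
  have hpos : 0 < ‖f s - ξ s‖ := by linarith
  calc ‖f' s‖ ≤ C / ‖f s - ξ s‖ := hspeed s hs' (sub_ne_zero.mp (norm_pos_iff.mp hpos))
    _ < K := by
      rw [div_lt_iff₀ hpos]
      nlinarith

theorem hydrodynamic_normalization_of_flow_general
    (t : ℝ) (ht : 0 < t) (C M : ℝ) (hC : 0 < C)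
    (ξ : ℝ → ℂ) (hξ : ∀ s ∈ Set.Icc 0 t, ‖ξ s‖ ≤ M)
    (G G' : ℝ → ℂ → ℂ)
    (hG0 : ∀ z : ℂ, M < ‖z‖ → G 0 z = z)
    (hGderiv : ∀ z : ℂ, M < ‖z‖ → ∀ s ∈ Set.Icc 0 t,
      HasDerivWithinAt (fun u => G u z) (G' s z) (Set.Icc 0 t) s)
    (hGbound : ∀ z : ℂ, M < ‖z‖ → ∀ s ∈ Set.Icc 0 t, G s z ≠ ξ s →
      ‖G' s z‖ ≤ C / ‖G s z - ξ s‖) :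
    ∀ ε > 0, ∃ ρ : ℝ, M < ρ ∧ ∀ z : ℂ, ρ ≤ ‖z‖ →
      ‖G t z - z‖ < ε := by
  intro ε hε
  set K := ε / (2 * t)
  have hK : 0 < K := by positivity
  have hKt : K * t = ε / 2 := by simp only [K]; field_simp
  have hCK : 0 < C / K := div_pos hC hK
  refine ⟨M + ε / 2 + C / K + 1, by linarith, fun z hz => ?_⟩
  have hzM : M < ‖z‖ := by linarith
  have hobstacle : ∀ s ∈ Icc 0 t, ‖z‖ - M ≤ ‖G 0 z - ξ s‖ := fun s hs => by
    rw [hG0 z hzM]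
    linarith [norm_sub_norm_le z (ξ s), hξ s hs]
  have hgap : C < K * (‖z‖ - M - K * (t - 0)) := by
    rw [sub_zero, hKt, ← div_lt_iff₀' hK]
    linarith
  have hdrift := norm_sub_le_mul_of_norm_deriv_le_div_dist (hGderiv z hzM) hobstacle
    (hGbound z hzM) hK.le (by rw [sub_zero, hKt]; linarith) hgap t (right_mem_Icc.mpr ht.le)
  rw [hG0 z hzM, sub_zero, hKt] at hdrift
  linarith

/-- The hydrodynamic normalization at infinity of the Komatu–Loewner flow, the core
of Theorem 5.8(i): under the Poisson-kernel bound on the time derivative, the flow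
satisfies `G(t, z) − z → 0` as `|z| → ∞`. -/
theorem hydrodynamic_normalization_of_flow
    (t : ℝ) (ht : 0 < t) (C M : ℝ) (hC : 0 < C) (hM : 0 ≤ M)
    (ξ : ℝ → ℂ) (hξ : ∀ s ∈ Set.Icc 0 t, ‖ξ s‖ ≤ M)
    (G G' : ℝ → ℂ → ℂ)
    (hG0 : ∀ z : ℂ, M < ‖z‖ → G 0 z = z)
    (hGderiv : ∀ z : ℂ, M < ‖z‖ → ∀ s ∈ Set.Icc 0 t,
      HasDerivWithinAt (fun u => G u z) (G' s z) (Set.Icc 0 t) s)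
    (hGbound : ∀ z : ℂ, M < ‖z‖ → ∀ s ∈ Set.Icc 0 t, G s z ≠ ξ s →
      ‖G' s z‖ ≤ C / ‖G s z - ξ s‖) :
    ∀ ε > 0, ∃ ρ : ℝ, M < ρ ∧ ∀ z : ℂ, ρ ≤ ‖z‖ →
      ‖G t z - z‖ < ε :=
  hydrodynamic_normalization_of_flow_general t ht C M hC ξ hξ G G' hG0 hGderiv hGbound
end

section
/- Let ξ ∈ ℂ, let f be holomorphic on an open neighborhood of ξ, and suppose f'(ξ) ≠ 0. Then the limit, as z → ξ with z ≠ ξ, of −2·f'(ξ)²·f'(z)/(f(z) − f(ξ))² + 2·f'(z)/(z − ξ)² − 2·f''(z)/(z − ξ) exists and equals f''(ξ)²/(2·f'(ξ)) − (4/3)·f'''(ξ). (The limit of the quantity II(z, t) computed in Remark 6.13, following Lawler–Schramm–Werner's restriction-property computation.) -/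
open Filter Topology

/-! With `g = dslope f ξ` and `g₁ = dslope g ξ` we have `f z - f ξ = (z - ξ) g z` and
`g z - f'(ξ) = (z - ξ) g₁ z`, so `g² - f'(ξ)² = (z - ξ) g₁ (g + f'(ξ))` and the quantity equals
`2 P(z) / ((z - ξ) g(z)²)` with `P = f' g₁ (g + f'(ξ)) - f'' g²`. The function `P` is analytic
and vanishes at `ξ`, so the limit is `2 P'(ξ) / f'(ξ)²`; since the Taylor coefficients of `g` and
`g₁` at `ξ` are those of `f` shifted by one and two, `P'(ξ)` is expressed through `f''(ξ)` and
`f'''(ξ)`. -/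

section
variable {𝕜 : Type*} [NontriviallyNormedField 𝕜] {E : Type*} [NormedAddCommGroup E]
  [NormedSpace 𝕜 E] {f : 𝕜 → E} {ξ : 𝕜}

protected theorem AnalyticAt.dslope (hf : AnalyticAt 𝕜 f ξ) : AnalyticAt 𝕜 (dslope f ξ) ξ :=
  let ⟨_, hp⟩ := hf
  ⟨_, hp.has_fpower_series_dslope_fslope⟩

end

section
variable {𝕜 : Type*} [NontriviallyNormedField 𝕜] [CompleteSpace 𝕜] {f : 𝕜 → 𝕜} {ξ : 𝕜}

theorem AnalyticAt.iterate_deriv_succ_eq_mul_iterate_deriv_dslope (hf : AnalyticAt 𝕜 f ξ)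
    (n : ℕ) : deriv^[n + 1] f ξ = (n + 1) * deriv^[n] (dslope f ξ) ξ := by
  rw [← iteratedDeriv_eq_iterate, ← iteratedDeriv_eq_iterate]
  have hf_eq : f = fun z => f ξ + (z - ξ) * dslope f ξ z := by
    funext z
    rw [← smul_eq_mul, sub_smul_dslope, add_sub_cancel]
  calc iteratedDeriv (n + 1) f ξ
      = iteratedDeriv (n + 1) (fun z => (z - ξ) * dslope f ξ z) ξ := by
        conv_lhs => rw [hf_eq]
        exact iteratedDeriv_const_add n.succ_pos _
    _ = (n + 1) * iteratedDeriv n (dslope f ξ) ξ := by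
        rw [iteratedDeriv_fun_mul (by fun_prop) hf.dslope.contDiffAt, Finset.sum_eq_single 1]
        · simp
        -- Leibniz rule: only the term differentiating `z - ξ` exactly once survives.
        · rintro (_ | _ | i) - hi
          · simp
          · exact absurd rfl hi
          · simp [iteratedDeriv_succ', iteratedDeriv_const]
        · simp
end

noncomputable section
variable {𝕜 : Type*} [NontriviallyNormedField 𝕜] {f : 𝕜 → 𝕜} {ξ z : 𝕜}

/-- The quantity `II(z, t)` of Remark 6.13, as a function of `z`. -/
def restrictionQuantity (f : 𝕜 → 𝕜) (ξ z : 𝕜) : 𝕜 :=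
  -2 * deriv f ξ ^ 2 * deriv f z / (f z - f ξ) ^ 2
    + 2 * deriv f z / (z - ξ) ^ 2 - 2 * deriv (deriv f) z / (z - ξ)

def restrictionNumerator (f : 𝕜 → 𝕜) (ξ z : 𝕜) : 𝕜 :=
  deriv f z * dslope (dslope f ξ) ξ z * (dslope f ξ z + deriv f ξ)
    - deriv (deriv f) z * dslope f ξ z ^ 2

theorem restrictionQuantity_eq_div_sq (hz : z ≠ ξ) (hgz : dslope f ξ z ≠ 0) :
    restrictionQuantity f ξ z
      = 2 * (restrictionNumerator f ξ z / (z - ξ)) / dslope f ξ z ^ 2 := by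
  have hf : f z - f ξ = (z - ξ) * dslope f ξ z := by rw [← smul_eq_mul, sub_smul_dslope]
  have hg : dslope f ξ z - deriv f ξ = (z - ξ) * dslope (dslope f ξ) ξ z := by
    rw [← smul_eq_mul, sub_smul_dslope, dslope_same]
  have hzξ : z - ξ ≠ 0 := sub_ne_zero.mpr hz
  rw [restrictionQuantity, restrictionNumerator, hf]
  field_simp
  linear_combination (2 * deriv f z * (dslope f ξ z + deriv f ξ)) * hg

variable [CompleteSpace 𝕜]

theorem AnalyticAt.restrictionNumerator_self (hf : AnalyticAt 𝕜 f ξ) :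
    restrictionNumerator f ξ ξ = 0 := by
  have hf2 : deriv (deriv f) ξ = 2 * deriv (dslope f ξ) ξ :=
    (hf.iterate_deriv_succ_eq_mul_iterate_deriv_dslope 1).trans (by norm_num)
  rw [restrictionNumerator, dslope_same, dslope_same, hf2]
  ring

theorem AnalyticAt.hasDerivAt_restrictionNumerator [CharZero 𝕜] (hf : AnalyticAt 𝕜 f ξ) :
    HasDerivAt (restrictionNumerator f ξ)
      (deriv f ξ * deriv (deriv f) ξ ^ 2 / 4
        - 2 / 3 * deriv f ξ ^ 2 * deriv (deriv (deriv f)) ξ) ξ := by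
  have hg : AnalyticAt 𝕜 (dslope f ξ) ξ := hf.dslope
  have hf2 : deriv (deriv f) ξ = 2 * deriv (dslope f ξ) ξ :=
    (hf.iterate_deriv_succ_eq_mul_iterate_deriv_dslope 1).trans (by norm_num)
  have hf3 : deriv (deriv (deriv f)) ξ = 3 * deriv (deriv (dslope f ξ)) ξ :=
    (hf.iterate_deriv_succ_eq_mul_iterate_deriv_dslope 2).trans (by norm_num)
  have hg2 : deriv (deriv (dslope f ξ)) ξ = 2 * deriv (dslope (dslope f ξ) ξ) ξ :=
    (hg.iterate_deriv_succ_eq_mul_iterate_deriv_dslope 1).trans (by norm_num)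
  refine ((((hf.deriv.differentiableAt.hasDerivAt.mul hg.dslope.differentiableAt.hasDerivAt).mul
    (hg.differentiableAt.hasDerivAt.add_const (deriv f ξ))).sub
    (hf.deriv.deriv.differentiableAt.hasDerivAt.mul
      (hg.differentiableAt.hasDerivAt.pow 2)))).congr_deriv ?_
  simp only [dslope_same, Pi.mul_apply, Pi.pow_apply]
  rw [hf3, hg2, hf2]
  ring
end

/-- The limit of the quantity `II(z, t)` computed in Remark 6.13, following
Lawler–Schramm–Werner's restriction-property computation: for `f` holomorphic
near `ξ` with `f'(ξ) ≠ 0`,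
`−2 f'(ξ)² f'(z)/(f(z) − f(ξ))² + 2 f'(z)/(z − ξ)² − 2 f''(z)/(z − ξ)`
tends to `f''(ξ)²/(2 f'(ξ)) − (4/3) f'''(ξ)` as `z → ξ`, `z ≠ ξ`. -/
theorem restriction_property_limit
    (ξ : ℂ) (U : Set ℂ) (hU : IsOpen U) (hξU : ξ ∈ U)
    (f : ℂ → ℂ) (hf : DifferentiableOn ℂ f U) (hf' : deriv f ξ ≠ 0) :
    Tendsto
      (fun z : ℂ =>
        -2 * (deriv f ξ) ^ 2 * deriv f z / (f z - f ξ) ^ 2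
          + 2 * deriv f z / (z - ξ) ^ 2 - 2 * deriv (deriv f) z / (z - ξ))
      (𝓝[≠] ξ)
      (𝓝 ((deriv (deriv f) ξ) ^ 2 / (2 * deriv f ξ)
        - (4 / 3) * deriv (deriv (deriv f)) ξ)) := by
  have hfa : AnalyticAt ℂ f ξ := hf.analyticOnNhd hU ξ hξU
  have hg : Tendsto (dslope f ξ) (𝓝[≠] ξ) (𝓝 (deriv f ξ)) := by
    simpa only [dslope_same] using hfa.dslope.continuousAt.tendsto.mono_left nhdsWithin_le_nhds
  have hslope := hasDerivAt_iff_tendsto_slope.mp hfa.hasDerivAt_restrictionNumerator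
  have hquot : restrictionQuantity f ξ =ᶠ[𝓝[≠] ξ]
      fun z => 2 * slope (restrictionNumerator f ξ) ξ z / dslope f ξ z ^ 2 := by
    filter_upwards [self_mem_nhdsWithin, hg.eventually_ne hf'] with z hz hgz
    rw [restrictionQuantity_eq_div_sq hz hgz, slope_def_field, hfa.restrictionNumerator_self,
      sub_zero]
  show Tendsto (restrictionQuantity f ξ) _ _
  convert ((hslope.const_mul 2).div (hg.pow 2) (pow_ne_zero 2 hf')).congr' hquot.symm using 2
  field_simp
  ring
end
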